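/- Let ε > 0 and μ, μ̃ < 1 be arbitrary, and let F be a probability measure supported in (-∞,1] with finite moment generating function near 0. Then there exists δ > 0 such that for every probability measure G supported in (-∞,1] with finite mean satisfying E(G) ≥ μ̃ and d_L(F,G) ≤ δ, one has |D̃_inf(G,μ) − D̃_inf(F,μ)| ≤ ε. -/

import Mathlib

open MeasureTheory ProbabilityTheory Set Filter
open scoped ENNReal NNReal Classical BoundedContinuousFunction

noncomputable section

/-- Kullback–Leibler divergence `D(F‖G)` between measures on ℝ
(`+∞` unless `F ≪ G` and `log (dF/dG)` is `F`-integrable). -/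
def KL (F G : Measure ℝ) : ℝ≥0∞ :=
  if F ≪ G ∧ Integrable (fun x => Real.log (F.rnDeriv G x).toReal) F
  then ENNReal.ofReal (∫ x, Real.log (F.rnDeriv G x).toReal ∂F) else ⊤

/-- `D_inf(F,μ;𝒜)`: infimum of `D(F‖G)` over probability measures `G` supported in
`(-∞,1]` with (finite) mean `E(G) > μ`.  (For `G` supported in `(-∞,1]` the mean is
well defined in `[-∞,1]`, and `E(G) > μ` holds iff `G` has integrable identity with
`∫ x dG > μ`.) -/
def DinfSemi (F : Measure ℝ) (μ : ℝ) : ℝ≥0∞ :=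
  ⨅ G ∈ {G : Measure ℝ | IsProbabilityMeasure G ∧ G (Set.Ioi 1) = 0 ∧
      Integrable (fun x : ℝ => x) G ∧ μ < ∫ x, x ∂G}, KL F G

/-- `D_inf(F,μ;𝒜_a)`: infimum of `D(F‖G)` over probability measures `G` supported in
`[a,1]` with mean `E(G) > μ`. -/
def DinfBdd (a : ℝ) (F : Measure ℝ) (μ : ℝ) : ℝ≥0∞ :=
  ⨅ G ∈ {G : Measure ℝ | IsProbabilityMeasure G ∧ G (Set.Icc a 1) = 1 ∧
      μ < ∫ x, x ∂G}, KL F G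

/-- `L(ν;F,μ) = ∫ log(1-(x-μ)ν) dF(x)`, as an extended real number in `[-∞,∞)`:
the value is `⊥ = -∞` when the integrand equals `-∞` on a non-`F`-null set or when
its (necessarily negative, for `F` supported in `(-∞,1]` with finite mean) part fails
to be integrable. -/
def LL (F : Measure ℝ) (μ ν : ℝ) : EReal :=
  if Integrable (fun x => Real.log (1 - (x - μ) * ν)) F ∧ F {x | 1 - (x - μ) * ν ≤ 0} = 0
  then ((∫ x, Real.log (1 - (x - μ) * ν) ∂F : ℝ) : EReal)
  else ⊥

/-- `D̃_inf(F,μ) = sup_{0 ≤ ν ≤ 1/(1-μ)} L(ν;F,μ)`. -/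
def Dtilde (F : Measure ℝ) (μ : ℝ) : EReal :=
  ⨆ ν ∈ Set.Icc (0 : ℝ) (1 - μ)⁻¹, LL F μ ν

/-- The moment generating function of `F` is finite in a neighborhood of the origin. -/
def MGFNearZero (F : Measure ℝ) : Prop :=
  ∃ ε > (0 : ℝ), ∀ l : ℝ, |l| < ε → Integrable (fun x => Real.exp (l * x)) F

/-- Fenchel–Legendre transform `Λ*(x) = sup_λ {λx - log ∫ e^{λu} dF(u)}` of the
logarithmic moment generating function of `F`. -/
def Legendre (F : Measure ℝ) (x : ℝ) : EReal :=
  ⨆ l : ℝ, ((l * x : ℝ) : EReal) -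
    ENNReal.log (∫⁻ y, ENNReal.ofReal (Real.exp (l * y)) ∂F)

/-- Empirical distribution `F̂_t = (1/t) ∑_{i<t} δ_{X_i}`. -/
def empMeas {Ω : Type*} [MeasurableSpace Ω] (X : ℕ → Ω → ℝ) (t : ℕ) (ω : Ω) : Measure ℝ :=
  (t : ℝ≥0∞)⁻¹ • ∑ i ∈ Finset.range t, Measure.dirac (X i ω)

/-- Empirical mean `μ̂_t = (1/t) ∑_{i<t} X_i`. -/
def empMean {Ω : Type*} (X : ℕ → Ω → ℝ) (t : ℕ) (ω : Ω) : ℝ :=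
  (∑ i ∈ Finset.range t, X i ω) / t

end

noncomputable section

/-- Lévy distance between two (probability) measures on ℝ:
`d_L(F,G) = inf{h > 0 : ∀ x, F(x-h) - h ≤ G(x) ≤ F(x+h) + h}`. -/
def levyDist (F G : Measure ℝ) : ℝ :=
  sInf {h : ℝ | 0 < h ∧ ∀ x : ℝ,
    (F (Set.Iic (x - h))).toReal - h ≤ (G (Set.Iic x)).toReal ∧
    (G (Set.Iic x)).toReal ≤ (F (Set.Iic (x + h))).toReal + h}

end


/-!
Restricting `ν` to `[0, (1 - η)/(1 - μ)]` changes `D̃_inf` by at most `η ν (μ - E)`, by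
concavity of `log`; on that range the integrand `log (1 - (x - μ) ν)` is at least `log η` on
`(-∞, 1]`. Clamping `x` at `-M` then changes the integrals by `O(M^{-1/2}) (1 - E)`, uniformly
in the measure, because the integrand grows like a square root. The clamped integrand is
antitone and Lipschitz, and the integral of such a function moves by `O(h)` between measures at
Lévy distance `h`: compare both with one step function on a grid of mesh about `h`.
-/

open scoped Topology

lemma ae_le_of_measure_Ioi_eq_zero {H : Measure ℝ} {b : ℝ} (h : H (Ioi b) = 0) :
    ∀ᵐ x ∂H, x ≤ b := by
  filter_upwards [measure_eq_zero_iff_ae_notMem.1 h] with x hx using not_lt.1 hx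

lemma MGFNearZero.integrable_id {F : Measure ℝ} (h : MGFNearZero F) :
    Integrable (fun x : ℝ => x) F := by
  obtain ⟨r, hr, hexp⟩ := h
  have h0 : (0 : ℝ) ∈ interior (integrableExpSet id F) :=
    mem_interior_iff_mem_nhds.2 <| mem_of_superset (Metric.ball_mem_nhds 0 hr)
      fun l hl => hexp l (by simpa using hl)
  simpa using integrable_pow_of_mem_interior_integrableExpSet h0 1

lemma integrable_log_of_ae_le {α : Type*} [MeasurableSpace α] {H : Measure α} [IsFiniteMeasure H]
    {q : α → ℝ} {η : ℝ} (hη : 0 < η) (hq : Integrable q H) (hηq : ∀ᵐ x ∂H, η ≤ q x) :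
    Integrable (fun x => Real.log (q x)) H := by
  refine Integrable.mono' ((integrable_const |Real.log η|).add hq.abs)
    (Real.measurable_log.comp_aemeasurable hq.aemeasurable).aestronglyMeasurable ?_
  filter_upwards [hηq] with x hx
  simp only [Pi.add_apply, Real.norm_eq_abs, abs_le]
  constructor
  · linarith [Real.log_le_log hη hx, neg_abs_le (Real.log η), abs_nonneg (q x)]
  · linarith [Real.log_le_sub_one_of_pos (hη.trans_le hx), le_abs_self (q x),
      abs_nonneg (Real.log η)]

lemma Antitone.integrable_of_ae_le {H : Measure ℝ} [IsFiniteMeasure H] {g : ℝ → ℝ} {A b : ℝ}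
    (hg : Antitone g) (hA : ∀ x, g x ≤ A) (hb : ∀ᵐ x ∂H, x ≤ b) : Integrable g H := by
  refine Integrable.of_bound hg.measurable.aestronglyMeasurable (max |g b| |A|) ?_
  filter_upwards [hb] with x hx using abs_le_max_abs_abs (hg hx) (hA x)

lemma abs_integral_sub_le_of_le_of_sub_le {H : Measure ℝ} [IsProbabilityMeasure H]
    (hs : H (Ioi 1) = 0) (hi : Integrable (fun x : ℝ => x) H) {f g : ℝ → ℝ} {κ : ℝ}
    (hf : Integrable f H) (hg : Integrable g H) (hgf : ∀ x ≤ 1, g x ≤ f x)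
    (hfg : ∀ x ≤ 1, f x - g x ≤ κ * (1 - x)) :
    |∫ x, f x ∂H - ∫ x, g x ∂H| ≤ κ * (1 - ∫ x, x ∂H) := by
  have hle1 := ae_le_of_measure_Ioi_eq_zero hs
  rw [← integral_sub hf hg, abs_of_nonneg (integral_nonneg_of_ae (by
    filter_upwards [hle1] with x hx using sub_nonneg.2 (hgf x hx)))]
  calc ∫ x, (f x - g x) ∂H ≤ ∫ x, κ * (1 - x) ∂H :=
        integral_mono_ae (hf.sub hg) (((integrable_const 1).sub hi).const_mul κ)
          (by filter_upwards [hle1] with x hx using hfg x hx)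
    _ = κ * (1 - ∫ x, x ∂H) := by
        rw [integral_const_mul, integral_sub (integrable_const 1) hi, integral_const]
        simp

section LogIntegrand

variable {μ η ν : ℝ}

lemma le_one_sub_mul_of_le_one (hμ : μ < 1) (hν : ν ∈ Icc 0 ((1 - η) * (1 - μ)⁻¹)) {c : ℝ}
    (hc : c ≤ 1) : η ≤ 1 - (c - μ) * ν := by
  have h1 : (1 - μ) * ν ≤ 1 - η := by
    have := hν.2
    rw [← div_eq_mul_inv, le_div_iff₀ (sub_pos.2 hμ)] at this
    linarith
  nlinarith [hν.1]

lemma le_inv_one_sub_of_mem_Icc (hμ : μ < 1) (hη : 0 ≤ η)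
    (hν : ν ∈ Icc 0 ((1 - η) * (1 - μ)⁻¹)) : ν ≤ (1 - μ)⁻¹ :=
  hν.2.trans (mul_le_of_le_one_left (inv_nonneg.2 (sub_pos.2 hμ).le) (by linarith))

lemma integrable_log_one_sub_mul (hμ : μ < 1) (hη : 0 < η)
    (hν : ν ∈ Icc 0 ((1 - η) * (1 - μ)⁻¹)) {H : Measure ℝ} [IsProbabilityMeasure H]
    (hs : H (Ioi 1) = 0) (hi : Integrable (fun x : ℝ => x) H) :
    Integrable (fun x => Real.log (1 - (x - μ) * ν)) H :=
  integrable_log_of_ae_le hη ((integrable_const 1).sub ((hi.sub (integrable_const μ)).mul_const ν))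
    (by filter_upwards [ae_le_of_measure_Ioi_eq_zero hs] with x hx
          using le_one_sub_mul_of_le_one hμ hν hx)

lemma LL_eq_integral (hμ : μ < 1) (hη : 0 < η) (hν : ν ∈ Icc 0 ((1 - η) * (1 - μ)⁻¹))
    {H : Measure ℝ} [IsProbabilityMeasure H] (hs : H (Ioi 1) = 0)
    (hi : Integrable (fun x : ℝ => x) H) :
    LL H μ ν = ((∫ x, Real.log (1 - (x - μ) * ν) ∂H : ℝ) : EReal) := by
  refine if_pos ⟨integrable_log_one_sub_mul hμ hη hν hs hi, measure_mono_null (fun x hx => ?_) hs⟩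
  by_contra hx1
  have hx' : 1 - (x - μ) * ν ≤ 0 := hx
  linarith [le_one_sub_mul_of_le_one hμ hν (not_lt.1 hx1)]

lemma integral_log_one_sub_mul_le {H : Measure ℝ} [IsProbabilityMeasure H]
    (hi : Integrable (fun x : ℝ => x) H) (hint : Integrable (fun x => Real.log (1 - (x - μ) * ν)) H)
    (hpos : ∀ᵐ x ∂H, 0 < 1 - (x - μ) * ν) :
    ∫ x, Real.log (1 - (x - μ) * ν) ∂H ≤ ν * (μ - ∫ x, x ∂H) := by
  calc ∫ x, Real.log (1 - (x - μ) * ν) ∂H ≤ ∫ x, (μ - x) * ν ∂H := by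
        refine integral_mono_ae hint (((integrable_const μ).sub hi).mul_const ν) ?_
        filter_upwards [hpos] with x hx
        linarith [Real.log_le_sub_one_of_pos hx]
    _ = ν * (μ - ∫ x, x ∂H) := by
        rw [integral_mul_const, integral_sub (integrable_const μ) hi, integral_const]
        simp [mul_comm]

lemma LL_le_integral_add (hμ : μ < 1) (hη0 : 0 < η) (hη1 : η ≤ 1)
    (hν : ν ∈ Icc 0 (1 - μ)⁻¹) {H : Measure ℝ} [IsProbabilityMeasure H]
    (hs : H (Ioi 1) = 0) (hi : Integrable (fun x : ℝ => x) H) :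
    LL H μ ν ≤ ((∫ x, Real.log (1 - (x - μ) * ((1 - η) * ν)) ∂H
      + η * (ν * (μ - ∫ x, x ∂H)) : ℝ) : EReal) := by
  unfold LL
  split_ifs with h
  swap
  · exact bot_le
  obtain ⟨hint, hnull⟩ := h
  have hpos : ∀ᵐ x ∂H, 0 < 1 - (x - μ) * ν := by
    filter_upwards [measure_eq_zero_iff_ae_notMem.1 hnull] with x hx
    simpa using hx
  have hν' : (1 - η) * ν ∈ Icc 0 ((1 - η) * (1 - μ)⁻¹) :=
    ⟨mul_nonneg (sub_nonneg.2 hη1) hν.1, mul_le_mul_of_nonneg_left hν.2 (sub_nonneg.2 hη1)⟩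
  -- concavity of `log`: `(1-η) log q ≤ log ((1-η) q + η)`
  have hconc : (1 - η) * ∫ x, Real.log (1 - (x - μ) * ν) ∂H ≤
      ∫ x, Real.log (1 - (x - μ) * ((1 - η) * ν)) ∂H := by
    rw [← integral_const_mul]
    refine integral_mono_ae (hint.const_mul _) (integrable_log_one_sub_mul hμ hη0 hν' hs hi) ?_
    filter_upwards [hpos] with x hx
    have key := (strictConcaveOn_log_Ioi.concaveOn).2 (mem_Ioi.2 hx) (mem_Ioi.2 one_pos)
      (sub_nonneg.2 hη1) hη0.le (by ring)
    simp only [smul_eq_mul, Real.log_one, mul_zero, add_zero] at key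
    convert key using 2
    ring
  have hle := integral_log_one_sub_mul_le hi hint hpos
  rw [EReal.coe_le_coe_iff]
  nlinarith

end LogIntegrand

lemma Dtilde_le_Dtilde_add {μ η c ε' : ℝ} (hμ : μ < 1) (hη0 : 0 < η) (hη1 : η ≤ 1)
    {H₁ H₂ : Measure ℝ} [IsProbabilityMeasure H₁] [IsProbabilityMeasure H₂]
    (hs₁ : H₁ (Ioi 1) = 0) (hs₂ : H₂ (Ioi 1) = 0)
    (hi₁ : Integrable (fun x : ℝ => x) H₁) (hi₂ : Integrable (fun x : ℝ => x) H₂)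
    (hc0 : 0 ≤ c) (hc : (1 - μ)⁻¹ * (μ - ∫ x, x ∂H₁) ≤ c)
    (hclose : ∀ ν ∈ Icc 0 ((1 - η) * (1 - μ)⁻¹),
      ∫ x, Real.log (1 - (x - μ) * ν) ∂H₁ ≤ ∫ x, Real.log (1 - (x - μ) * ν) ∂H₂ + ε') :
    Dtilde H₁ μ ≤ Dtilde H₂ μ + ((η * c + ε' : ℝ) : EReal) := by
  refine iSup₂_le fun ν hν => ?_
  have hη1' : 0 ≤ 1 - η := sub_nonneg.2 hη1
  have hν' : (1 - η) * ν ∈ Icc 0 ((1 - η) * (1 - μ)⁻¹) :=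
    ⟨mul_nonneg hη1' hν.1, mul_le_mul_of_nonneg_left hν.2 hη1'⟩
  have hν'' : (1 - η) * ν ∈ Icc 0 (1 - μ)⁻¹ := ⟨hν'.1, le_inv_one_sub_of_mem_Icc hμ hη0.le hν'⟩
  have hνc : ν * (μ - ∫ x, x ∂H₁) ≤ c := by
    rcases le_total (μ - ∫ x, x ∂H₁) 0 with h | h
    · exact (mul_nonpos_of_nonneg_of_nonpos hν.1 h).trans hc0
    · exact (mul_le_mul_of_nonneg_right hν.2 h).trans hc
  calc LL H₁ μ ν
      ≤ ((∫ x, Real.log (1 - (x - μ) * ((1 - η) * ν)) ∂H₁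
          + η * (ν * (μ - ∫ x, x ∂H₁)) : ℝ) : EReal) := LL_le_integral_add hμ hη0 hη1 hν hs₁ hi₁
    _ ≤ ((∫ x, Real.log (1 - (x - μ) * ((1 - η) * ν)) ∂H₂ + (η * c + ε') : ℝ) : EReal) := by
        rw [EReal.coe_le_coe_iff]
        nlinarith [hclose _ hν']
    _ = LL H₂ μ ((1 - η) * ν) + ((η * c + ε' : ℝ) : EReal) := by
        rw [LL_eq_integral hμ hη0 hν' hs₂ hi₂, EReal.coe_add]
    _ ≤ Dtilde H₂ μ + ((η * c + ε' : ℝ) : EReal) := by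
        gcongr
        exact le_iSup₂ (f := fun ν (_ : ν ∈ Icc (0 : ℝ) (1 - μ)⁻¹) => LL H₂ μ ν) _ hν''

noncomputable def clampedLog (μ ν M x : ℝ) : ℝ := Real.log (1 - (min (max x (-M)) 1 - μ) * ν)

section ClampedLog

variable {μ η ν M : ℝ}

lemma le_clampedLog_arg (hμ : μ < 1) (hν : ν ∈ Icc 0 ((1 - η) * (1 - μ)⁻¹)) (x : ℝ) :
    η ≤ 1 - (min (max x (-M)) 1 - μ) * ν :=
  le_one_sub_mul_of_le_one hμ hν (min_le_right _ _)

lemma clampedLog_sub_le (hμ : μ < 1) (hη : 0 < η) (hν : ν ∈ Icc 0 ((1 - η) * (1 - μ)⁻¹))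
    {x y : ℝ} (hxy : x ≤ y) :
    clampedLog μ ν M x - clampedLog μ ν M y ≤ (1 - μ)⁻¹ / η * (y - x) := by
  have hνmax := le_inv_one_sub_of_mem_Icc hμ hη.le hν
  have hclamp : 0 ≤ min (max y (-M)) 1 - min (max x (-M)) 1 ∧
      min (max y (-M)) 1 - min (max x (-M)) 1 ≤ y - x := by
    constructor <;> simp only [min_def, max_def] <;> split_ifs <;> linarith
  have hqy := le_clampedLog_arg (M := M) hμ hν y
  set qx := 1 - (min (max x (-M)) 1 - μ) * ν
  set qy := 1 - (min (max y (-M)) 1 - μ) * ν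
  have hdiff : qx - qy = (min (max y (-M)) 1 - min (max x (-M)) 1) * ν := by ring
  have hd0 : 0 ≤ qx - qy := hdiff ▸ mul_nonneg hclamp.1 hν.1
  have hd1 : qx - qy ≤ (y - x) * (1 - μ)⁻¹ :=
    hdiff ▸ mul_le_mul hclamp.2 hνmax hν.1 (by linarith [hclamp.1])
  have hqy0 : 0 < qy := hη.trans_le hqy
  calc Real.log qx - Real.log qy = Real.log (qx / qy) := (Real.log_div (by linarith) hqy0.ne').symm
    _ ≤ qx / qy - 1 := Real.log_le_sub_one_of_pos (div_pos (by linarith) hqy0)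
    _ = (qx - qy) / qy := by field_simp
    _ ≤ (qx - qy) / η := div_le_div_of_nonneg_left hd0 hη hqy
    _ ≤ (y - x) * (1 - μ)⁻¹ / η := by gcongr
    _ = (1 - μ)⁻¹ / η * (y - x) := by ring

lemma clampedLog_antitone (hμ : μ < 1) (hη : 0 < η) (hν : ν ∈ Icc 0 ((1 - η) * (1 - μ)⁻¹)) :
    Antitone (clampedLog μ ν M) := by
  intro x y hxy
  unfold clampedLog
  refine Real.log_le_log (hη.trans_le (le_clampedLog_arg hμ hν y)) ?_
  have : min (max x (-M)) 1 ≤ min (max y (-M)) 1 := min_le_min_right _ (max_le_max_right _ hxy)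
  nlinarith [hν.1]

lemma clampedLog_le_clampedLog_neg (hμ : μ < 1) (hη : 0 < η)
    (hν : ν ∈ Icc 0 ((1 - η) * (1 - μ)⁻¹)) (x : ℝ) :
    clampedLog μ ν M x ≤ clampedLog μ ν M (-M) := by
  rcases le_total x (-M) with h | h
  · simp only [clampedLog, max_eq_right h, max_self, le_refl]
  · exact clampedLog_antitone hμ hη hν h

lemma clampedLog_le_log (hμ : μ < 1) (hη : 0 < η) (hν : ν ∈ Icc 0 ((1 - η) * (1 - μ)⁻¹))
    {x : ℝ} (hx : x ≤ 1) : clampedLog μ ν M x ≤ Real.log (1 - (x - μ) * ν) := by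
  unfold clampedLog
  refine Real.log_le_log (hη.trans_le (le_clampedLog_arg hμ hν x)) ?_
  have : x ≤ min (max x (-M)) 1 := le_min (le_max_left _ _) hx
  nlinarith [hν.1]

lemma log_sub_clampedLog_le (hμ : μ < 1) (hη : 0 < η) (hν : ν ∈ Icc 0 ((1 - η) * (1 - μ)⁻¹))
    (hM : 0 ≤ M) {x : ℝ} (hx : x ≤ 1) :
    Real.log (1 - (x - μ) * ν) - clampedLog μ ν M x ≤
      (2 * √(1 + (1 - μ)⁻¹) + |Real.log η|) / √(1 + M) * (1 - x) := by
  have hx0 : 0 ≤ 1 - x := by linarith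
  rcases le_total (-M) x with hMx | hxM
  · have hclamp : min (max x (-M)) 1 = x := by rw [max_eq_left hMx, min_eq_left hx]
    rw [clampedLog, hclamp, sub_self]
    positivity
  have hνmax := le_inv_one_sub_of_mem_Icc hμ hη.le hν
  have hz0 : 0 ≤ 1 - (x - μ) * ν := (hη.trans_le (le_one_sub_mul_of_le_one hμ hν hx)).le
  -- `μ - x ≤ 1 - x` and `1 ≤ 1 - x` give linear growth of the argument of `log`
  have hz : 1 - (x - μ) * ν ≤ (1 + (1 - μ)⁻¹) * (1 - x) := by
    nlinarith [mul_le_mul hνmax (le_refl (1 - x)) hx0 (inv_nonneg.2 (sub_pos.2 hμ).le), hν.1]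
  have hsqrt1 : 1 ≤ √(1 - x) := Real.one_le_sqrt.2 (by linarith)
  have hsqrtM : √(1 - x) ≤ (1 - x) / √(1 + M) := by
    rw [le_div_iff₀ (Real.sqrt_pos.2 (by linarith))]
    calc √(1 - x) * √(1 + M) ≤ √(1 - x) * √(1 - x) := by gcongr; linarith
      _ = 1 - x := Real.mul_self_sqrt hx0
  have hlog : Real.log (1 - (x - μ) * ν) ≤ 2 * √(1 + (1 - μ)⁻¹) * √(1 - x) := by
    calc Real.log (1 - (x - μ) * ν) ≤ 2 * √(1 - (x - μ) * ν) := by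
          have := Real.log_le_rpow_div hz0 one_half_pos
          rw [← Real.sqrt_eq_rpow] at this
          linarith
      _ ≤ 2 * √((1 + (1 - μ)⁻¹) * (1 - x)) := by gcongr
      _ = 2 * √(1 + (1 - μ)⁻¹) * √(1 - x) := by rw [Real.sqrt_mul (by positivity), mul_assoc]
  have hclamp : Real.log η ≤ clampedLog μ ν M x :=
    Real.log_le_log hη (le_clampedLog_arg hμ hν x)
  calc Real.log (1 - (x - μ) * ν) - clampedLog μ ν M x
      ≤ 2 * √(1 + (1 - μ)⁻¹) * √(1 - x) + |Real.log η| * √(1 - x) := by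
        nlinarith [neg_abs_le (Real.log η), abs_nonneg (Real.log η)]
    _ = (2 * √(1 + (1 - μ)⁻¹) + |Real.log η|) * √(1 - x) := by ring
    _ ≤ (2 * √(1 + (1 - μ)⁻¹) + |Real.log η|) * ((1 - x) / √(1 + M)) := by gcongr
    _ = _ := by ring

lemma abs_integral_log_sub_integral_clampedLog_le (hμ : μ < 1) (hη : 0 < η)
    (hν : ν ∈ Icc 0 ((1 - η) * (1 - μ)⁻¹)) (hM : 0 ≤ M) {H : Measure ℝ} [IsProbabilityMeasure H]
    (hs : H (Ioi 1) = 0) (hi : Integrable (fun x : ℝ => x) H) :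
    |∫ x, Real.log (1 - (x - μ) * ν) ∂H - ∫ x, clampedLog μ ν M x ∂H| ≤
      (2 * √(1 + (1 - μ)⁻¹) + |Real.log η|) / √(1 + M) * (1 - ∫ x, x ∂H) :=
  abs_integral_sub_le_of_le_of_sub_le hs hi (integrable_log_one_sub_mul hμ hη hν hs hi)
    ((clampedLog_antitone hμ hη hν).integrable_of_ae_le
      (clampedLog_le_clampedLog_neg hμ hη hν) (ae_le_of_measure_Ioi_eq_zero hs))
    (fun _ hx => clampedLog_le_log hμ hη hν hx) (fun _ hx => log_sub_clampedLog_le hμ hη hν hM hx)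

end ClampedLog

section LevyComparison

variable {g : ℝ → ℝ} {t : ℕ → ℝ}

noncomputable def gridStep (g : ℝ → ℝ) (t : ℕ → ℝ) (n : ℕ) (x : ℝ) : ℝ :=
  g (t n) + ∑ j ∈ Finset.range n, (Iic (t j)).indicator (fun _ => g (t j) - g (t (j + 1))) x

variable {n : ℕ} {τ : ℝ}

lemma gridStep_eq {k : ℕ} (hkn : k ≤ n) {x : ℝ} (hx : ∀ j, x ≤ t j ↔ k ≤ j) :
    gridStep g t n x = g (t k) := by
  simp only [gridStep, indicator_apply, mem_Iic, hx]
  rw [← Finset.sum_filter, Finset.range_eq_Ico, Finset.Ico_filter_le, max_eq_right k.zero_le,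
    Finset.sum_Ico_eq_sub _ hkn, Finset.sum_range_sub', Finset.sum_range_sub']
  ring

lemma gridStep_le_and_le (hg : Antitone g) (ht : Monotone t) (hg0 : ∀ x, g x ≤ g (t 0))
    (hτ : 0 ≤ τ) (hstep : ∀ j < n, g (t j) - g (t (j + 1)) ≤ τ) {x : ℝ} (hx : x ≤ t n) :
    gridStep g t n x ≤ g x ∧ g x ≤ gridStep g t n x + τ := by
  have hex : ∃ k, x ≤ t k := ⟨n, hx⟩
  have hiff : ∀ j, x ≤ t j ↔ Nat.find hex ≤ j :=
    fun j => ⟨fun h => Nat.find_min' hex h, fun h => (Nat.find_spec hex).trans (ht h)⟩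
  rw [gridStep_eq (Nat.find_min' hex hx) hiff]
  refine ⟨hg (Nat.find_spec hex), ?_⟩
  rcases eq_or_ne (Nat.find hex) 0 with h0 | h0
  · rw [h0]
    linarith [hg0 x]
  · obtain ⟨k, hk⟩ := Nat.exists_eq_add_one_of_ne_zero h0
    have hlt : t k < x := not_le.1 fun h => by have := (hiff k).1 h; omega
    have hkn : k < n := by have := Nat.find_min' hex hx; omega
    rw [hk]
    linarith [hg hlt.le, hstep k hkn]

lemma integrable_gridStep (H : Measure ℝ) [IsFiniteMeasure H] : Integrable (gridStep g t n) H :=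
  (integrable_const _).add
    (integrable_finsetSum _ fun _ _ => (integrable_const _).indicator measurableSet_Iic)

lemma integral_gridStep (H : Measure ℝ) [IsProbabilityMeasure H] :
    ∫ x, gridStep g t n x ∂H =
      g (t n) + ∑ j ∈ Finset.range n, (g (t j) - g (t (j + 1))) * H.real (Iic (t j)) := by
  unfold gridStep
  rw [integral_add (integrable_const _)
      (integrable_finsetSum _ fun _ _ => (integrable_const _).indicator measurableSet_Iic),
    integral_const, integral_finsetSum _ fun _ _ =>
      (integrable_const _).indicator measurableSet_Iic]
  simp [integral_indicator_const, mul_comm]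

lemma integral_le_integral_add_of_real_Iic_le {F G : Measure ℝ} [IsProbabilityMeasure F]
    [IsProbabilityMeasure G] (hg : Antitone g) (ht : Monotone t) (hg0 : ∀ x, g x ≤ g (t 0))
    (hτ : 0 ≤ τ) (hstep : ∀ j < n, g (t j) - g (t (j + 1)) ≤ τ) {h : ℝ}
    (hgap : ∀ j < n, t j + h ≤ t (j + 1)) (hF : ∀ᵐ x ∂F, x ≤ t n) (hG : ∀ᵐ x ∂G, x ≤ t n)
    (hGF : ∀ x, G.real (Iic x) ≤ F.real (Iic (x + h)) + h) :
    ∫ x, g x ∂G ≤ ∫ x, g x ∂F + 2 * τ + h * (g (t 0) - g (t n)) := by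
  set d : ℕ → ℝ := fun j => g (t j) - g (t (j + 1))
  set p : ℕ → ℝ := fun j => F.real (Iic (t j))
  have hd0 : ∀ j, 0 ≤ d j := fun j => sub_nonneg.2 (hg (ht j.le_succ))
  have hp_mono : ∀ j, p j ≤ p (j + 1) := fun j => measureReal_mono (Iic_subset_Iic.2 (ht j.le_succ))
  have hGup : ∫ x, g x ∂G ≤ ∫ x, gridStep g t n x ∂G + τ := by
    have hadd := integral_add (integrable_gridStep (g := g) (t := t) (n := n) G)
      (integrable_const τ)
    simp only [integral_const, probReal_univ, one_smul] at hadd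
    rw [← hadd]
    refine integral_mono_ae (hg.integrable_of_ae_le hg0 hG)
      ((integrable_gridStep G).add (integrable_const τ)) ?_
    filter_upwards [hG] with x hx using (gridStep_le_and_le hg ht hg0 hτ hstep hx).2
  have hFlow : ∫ x, gridStep g t n x ∂F ≤ ∫ x, g x ∂F :=
    integral_mono_ae (integrable_gridStep F) (hg.integrable_of_ae_le hg0 hF)
      (by filter_upwards [hF] with x hx using (gridStep_le_and_le hg ht hg0 hτ hstep hx).1)
  -- a mass shift by `h` costs at most one grid cell
  have hcdf : ∑ j ∈ Finset.range n, d j * G.real (Iic (t j)) ≤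
      ∑ j ∈ Finset.range n, d j * p (j + 1) + h * (g (t 0) - g (t n)) := by
    rw [← Finset.sum_range_sub' (fun j => g (t j)), Finset.mul_sum, ← Finset.sum_add_distrib]
    refine Finset.sum_le_sum fun j hj => ?_
    have hj := Finset.mem_range.1 hj
    have hshift : F.real (Iic (t j + h)) ≤ p (j + 1) :=
      measureReal_mono (Iic_subset_Iic.2 (hgap j hj))
    have : G.real (Iic (t j)) ≤ p (j + 1) + h := by linarith [hGF (t j)]
    nlinarith [hd0 j]
  -- summation by parts: the jumps of `p` add up to at most one
  have habel : ∑ j ∈ Finset.range n, d j * p (j + 1) ≤ ∑ j ∈ Finset.range n, d j * p j + τ := by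
    have hsum : ∑ j ∈ Finset.range n, d j * (p (j + 1) - p j) ≤
        ∑ j ∈ Finset.range n, τ * (p (j + 1) - p j) :=
      Finset.sum_le_sum fun j hj =>
        mul_le_mul_of_nonneg_right (hstep j (Finset.mem_range.1 hj)) (sub_nonneg.2 (hp_mono j))
    rw [← Finset.mul_sum, Finset.sum_range_sub] at hsum
    simp only [mul_sub, Finset.sum_sub_distrib] at hsum
    nlinarith [show p n ≤ 1 from measureReal_le_one, show 0 ≤ p 0 from measureReal_nonneg]
  rw [integral_gridStep] at hGup hFlow
  linarith

end LevyComparison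

lemma integral_le_integral_add_of_lipschitz {F G : Measure ℝ} [IsProbabilityMeasure F]
    [IsProbabilityMeasure G] {g : ℝ → ℝ} {L a b h : ℝ} (hg : Antitone g)
    (hL : ∀ x y, x ≤ y → g x - g y ≤ L * (y - x)) (hga : ∀ x, g x ≤ g a) (hh : 0 < h)
    (hhab : h ≤ b - a) (hF : ∀ᵐ x ∂F, x ≤ b) (hG : ∀ᵐ x ∂G, x ≤ b)
    (hGF : ∀ x, G.real (Iic x) ≤ F.real (Iic (x + h)) + h) :
    ∫ x, g x ∂G ≤ ∫ x, g x ∂F + L * h * (b - a + 4) := by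
  set n := ⌊(b - a) / h⌋₊
  have hn1 : (1 : ℝ) ≤ n := by
    exact_mod_cast Nat.le_floor (by rw [Nat.cast_one, le_div_iff₀ hh]; linarith)
  have hnh : n * h ≤ b - a := (le_div_iff₀ hh).1 (Nat.floor_le (div_nonneg (by linarith) hh.le))
  have hn2 : b - a < (n + 1) * h := (div_lt_iff₀ hh).1 (Nat.lt_floor_add_one _)
  set Δ := (b - a) / n
  have hΔh : h ≤ Δ := (le_div_iff₀ (by linarith)).2 (by linarith)
  have hΔ2 : Δ ≤ 2 * h := (div_le_iff₀ (by linarith)).2 (by nlinarith)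
  have htn : a + n * Δ = b := by rw [mul_div_cancel₀ _ (by positivity)]; ring
  have hL0 : 0 ≤ L := by
    have := hL a b (by linarith)
    have := hg (show a ≤ b by linarith)
    nlinarith
  have key := integral_le_integral_add_of_real_Iic_le (t := fun j : ℕ => a + j * Δ) (n := n)
    (τ := L * Δ) hg (fun i j hij => by dsimp only; gcongr; linarith)
    (by simpa using hga) (mul_nonneg hL0 (by linarith))
    (fun j _ => by have := hL (a + j * Δ) (a + (j + 1 : ℕ) * Δ) (by push_cast; nlinarith)
                   push_cast at this ⊢; nlinarith)
    (fun j _ => by push_cast; nlinarith) (by rwa [htn]) (by rwa [htn]) hGF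
  simp only [htn, Nat.cast_zero, zero_mul, add_zero] at key
  nlinarith [hL a b (by linarith)]

lemma integral_clampedLog_le_add {μ η ν M h : ℝ} (hμ : μ < 1) (hη : 0 < η)
    (hν : ν ∈ Icc 0 ((1 - η) * (1 - μ)⁻¹)) (hh : 0 < h) (hhM : h ≤ 1 + M)
    {H₁ H₂ : Measure ℝ} [IsProbabilityMeasure H₁] [IsProbabilityMeasure H₂]
    (hs₁ : H₁ (Ioi 1) = 0) (hs₂ : H₂ (Ioi 1) = 0)
    (h₂₁ : ∀ x, H₂.real (Iic x) ≤ H₁.real (Iic (x + h)) + h) :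
    ∫ x, clampedLog μ ν M x ∂H₂ ≤ ∫ x, clampedLog μ ν M x ∂H₁ + (1 - μ)⁻¹ / η * h * (M + 5) := by
  have := integral_le_integral_add_of_lipschitz (b := 1) (clampedLog_antitone hμ hη hν)
    (fun x y hxy => clampedLog_sub_le hμ hη hν hxy) (clampedLog_le_clampedLog_neg hμ hη hν)
    hh (by linarith) (ae_le_of_measure_Ioi_eq_zero hs₁) (ae_le_of_measure_Ioi_eq_zero hs₂) h₂₁
  convert this using 2
  ring

lemma exists_levy_band {F G : Measure ℝ} [IsProbabilityMeasure F] [IsProbabilityMeasure G]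
    {r : ℝ} (hr : levyDist F G < r) :
    ∃ h, 0 < h ∧ h < r ∧ ∀ x, G.real (Iic x) ≤ F.real (Iic (x + h)) + h ∧
      F.real (Iic x) ≤ G.real (Iic (x + h)) + h := by
  have hone : (1 : ℝ) ∈ {h : ℝ | 0 < h ∧ ∀ x : ℝ,
      (F (Iic (x - h))).toReal - h ≤ (G (Iic x)).toReal ∧
      (G (Iic x)).toReal ≤ (F (Iic (x + h))).toReal + h} := by
    refine ⟨one_pos, fun x => ?_⟩
    simp only [← Measure.real_def]
    constructor <;> linarith [measureReal_le_one (μ := F) (s := Iic (x - 1)),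
      measureReal_le_one (μ := G) (s := Iic x), measureReal_nonneg (μ := G) (s := Iic x),
      measureReal_nonneg (μ := F) (s := Iic (x + 1))]
  obtain ⟨h, ⟨hh, hband⟩, hhr⟩ := (csInf_lt_iff ⟨0, fun h hh => hh.1.le⟩ ⟨1, hone⟩).1 hr
  refine ⟨h, hh, hhr, fun x => ⟨(hband x).2, ?_⟩⟩
  simpa [Measure.real_def] using (hband (x + h)).1

lemma exists_pos_forall_abs_integral_log_sub_le {μ η : ℝ} (hμ : μ < 1) (hη : 0 < η) (μt : ℝ)
    {F : Measure ℝ} [IsProbabilityMeasure F] (hsF : F (Ioi 1) = 0)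
    (hiF : Integrable (fun x : ℝ => x) F) {ε : ℝ} (hε : 0 < ε) :
    ∃ δ > 0, ∀ G : Measure ℝ, IsProbabilityMeasure G → G (Ioi 1) = 0 →
      Integrable (fun x : ℝ => x) G → μt ≤ ∫ x, x ∂G → levyDist F G ≤ δ →
      ∀ ν ∈ Icc 0 ((1 - η) * (1 - μ)⁻¹),
        |∫ x, Real.log (1 - (x - μ) * ν) ∂F - ∫ x, Real.log (1 - (x - μ) * ν) ∂G| ≤ ε := by
  set D := |1 - μt| + |1 - ∫ x, x ∂F|
  have hrate : Tendsto (fun M => (2 * √(1 + (1 - μ)⁻¹) + |Real.log η|) / √(1 + M) * D)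
      atTop (𝓝 0) := by
    simpa using (tendsto_const_nhds.div_atTop
      (Real.tendsto_sqrt_atTop.comp (tendsto_atTop_add_const_left _ 1 tendsto_id))).mul_const D
  obtain ⟨M, hMε, hM⟩ :=
    ((hrate.eventually (gt_mem_nhds (by positivity : 0 < ε / 4))).and
      (eventually_ge_atTop 0)).exists
  set L := (1 - μ)⁻¹ / η
  have hL : 0 < L := div_pos (inv_pos.2 (sub_pos.2 hμ)) hη
  obtain ⟨δ₀, hδ₀, hδ₀ε⟩ := exists_pos_mul_lt (by positivity : 0 < ε / 2) (2 * L * (M + 5))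
  refine ⟨min δ₀ ((1 + M) / 2), by positivity, fun G hG hsG hiG hmean hlevy ν hν => ?_⟩
  obtain ⟨h, hh, hhδ, hband⟩ := exists_levy_band (hlevy.trans_lt (lt_two_mul_self (by positivity)))
  have hhδ₀ : h ≤ 2 * δ₀ := hhδ.le.trans (by gcongr; exact min_le_left _ _)
  have hhM : h ≤ 1 + M := by linarith [min_le_right δ₀ ((1 + M) / 2)]
  have hLh : L * h * (M + 5) ≤ ε / 2 := by
    calc L * h * (M + 5) = L * (M + 5) * h := by ring
      _ ≤ L * (M + 5) * (2 * δ₀) := by gcongr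
      _ = 2 * L * (M + 5) * δ₀ := by ring
      _ ≤ ε / 2 := hδ₀ε.le
  have htail : ∀ H : Measure ℝ, IsProbabilityMeasure H → H (Ioi 1) = 0 →
      Integrable (fun x : ℝ => x) H → 1 - ∫ x, x ∂H ≤ D →
      |∫ x, Real.log (1 - (x - μ) * ν) ∂H - ∫ x, clampedLog μ ν M x ∂H| ≤ ε / 4 := by
    intro H _ hs hi hHD
    calc _ ≤ (2 * √(1 + (1 - μ)⁻¹) + |Real.log η|) / √(1 + M) * (1 - ∫ x, x ∂H) :=
          abs_integral_log_sub_integral_clampedLog_le hμ hη hν hM hs hi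
      _ ≤ (2 * √(1 + (1 - μ)⁻¹) + |Real.log η|) / √(1 + M) * D := by gcongr
      _ ≤ ε / 4 := hMε.le
  have hF := htail F inferInstance hsF hiF
    (by linarith [le_abs_self (1 - ∫ x, x ∂F), abs_nonneg (1 - μt)])
  have hG := htail G hG hsG hiG
    (by linarith [le_abs_self (1 - μt), abs_nonneg (1 - ∫ x, x ∂F)])
  have hFG := integral_clampedLog_le_add hμ hη hν hh hhM hsF hsG fun x => (hband x).1
  have hGF := integral_clampedLog_le_add hμ hη hν hh hhM hsG hsF fun x => (hband x).2
  rw [abs_le] at hF hG ⊢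
  constructor <;> linarith

theorem stmt10_general (ε μ μt : ℝ) (hε : 0 < ε) (hμ : μ < 1)
    (F : Measure ℝ) [IsProbabilityMeasure F] (hsupp : F (Set.Ioi 1) = 0)
    (hmgf : MGFNearZero F) :
    ∃ δ > (0 : ℝ), ∀ G : Measure ℝ, IsProbabilityMeasure G → G (Set.Ioi 1) = 0 →
      Integrable (fun x : ℝ => x) G → μt ≤ ∫ x, x ∂G → levyDist F G ≤ δ →
      Dtilde G μ ≤ Dtilde F μ + (ε : EReal) ∧
      Dtilde F μ ≤ Dtilde G μ + (ε : EReal) := by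
  have hiF := hmgf.integrable_id
  set c := (1 - μ)⁻¹ * (|μ - μt| + |μ - ∫ x, x ∂F|)
  have hμ' : 0 < (1 - μ)⁻¹ := inv_pos.2 (sub_pos.2 hμ)
  have hc0 : 0 ≤ c := by positivity
  obtain ⟨η₀, hη₀, hη₀c⟩ := exists_pos_mul_lt (half_pos hε) c
  set η := min η₀ 1
  have hη0 : 0 < η := lt_min hη₀ one_pos
  have hηε : ((η * c + ε / 2 : ℝ) : EReal) ≤ ε := EReal.coe_le_coe_iff.2 (by
    nlinarith [mul_le_mul_of_nonneg_right (min_le_left η₀ 1) hc0])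
  obtain ⟨δ, hδ, hclose⟩ :=
    exists_pos_forall_abs_integral_log_sub_le hμ hη0 μt hsupp hiF (half_pos hε)
  refine ⟨δ, hδ, fun G hG hsG hiG hmean hlevy => ?_⟩
  have hclose' := hclose G hG hsG hiG hmean hlevy
  have hcF : (1 - μ)⁻¹ * (μ - ∫ x, x ∂F) ≤ c :=
    mul_le_mul_of_nonneg_left (by linarith [le_abs_self (μ - ∫ x, x ∂F), abs_nonneg (μ - μt)])
      hμ'.le
  have hcG : (1 - μ)⁻¹ * (μ - ∫ x, x ∂G) ≤ c :=
    mul_le_mul_of_nonneg_left (by linarith [le_abs_self (μ - μt), abs_nonneg (μ - ∫ x, x ∂F)])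
      hμ'.le
  constructor
  · refine (Dtilde_le_Dtilde_add hμ hη0 (min_le_right _ _) hsG hsupp hiG hiF hc0 hcG
      fun ν hν => ?_).trans (add_le_add le_rfl hηε)
    linarith [(abs_le.1 (hclose' ν hν)).1]
  · refine (Dtilde_le_Dtilde_add hμ hη0 (min_le_right _ _) hsupp hsG hiF hiG hc0 hcF
      fun ν hν => ?_).trans (add_le_add le_rfl hηε)
    linarith [(abs_le.1 (hclose' ν hν)).2]

/-- (Lemma `lem_levy`.) Let `ε > 0`, `μ, μ̃ < 1`, and let `F` be a
probability measure supported in `(-∞,1]` with finite mgf near `0`. There exists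
`δ > 0` such that `|D̃_inf(G,μ) - D̃_inf(F,μ)| ≤ ε` for every probability measure `G`
supported in `(-∞,1]` with finite mean `E(G) ≥ μ̃` and `d_L(F,G) ≤ δ`. -/
theorem stmt10 (ε μ μt : ℝ) (hε : 0 < ε) (hμ : μ < 1) (hμt : μt < 1)
    (F : Measure ℝ) [IsProbabilityMeasure F] (hsupp : F (Set.Ioi 1) = 0)
    (hmgf : MGFNearZero F) :
    ∃ δ > (0 : ℝ), ∀ G : Measure ℝ, IsProbabilityMeasure G → G (Set.Ioi 1) = 0 →
      Integrable (fun x : ℝ => x) G → μt ≤ ∫ x, x ∂G → levyDist F G ≤ δ →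
      Dtilde G μ ≤ Dtilde F μ + (ε : EReal) ∧
      Dtilde F μ ≤ Dtilde G μ + (ε : EReal) :=
  stmt10_general ε μ μt hε hμ F hsupp hmgf
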